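/- Let n ≥ 1. Every scalar polynomial in P_{n-1}(ℝ³) with zero mean over a bounded domain P ⊂ ℝ³ (of positive measure) is the divergence of some vector polynomial in [P_n(ℝ³)]³; consequently, dim{q ∈ P_{n-1} : ∫_P q = 0} = π_{n-1,3} - 1 and the divergence map from [P_n]³ to P_{n-1} ∩ L²₀(P) restricted appropriately is surjective. -/

import Mathlib

open MvPolynomial MeasureTheory

noncomputable section

abbrev Poly3 := MvPolynomial (Fin 3) ℝ

/-- Divergence of a vector polynomial. -/
def pdiv (v : Fin 3 → Poly3) : Poly3 := ∑ i, pderiv i (v i)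

/-- The subspace of scalar polynomials of degree at most `m` with zero mean over a
bounded set `P`. -/
def zeroMeanPolys (P : Set (Fin 3 → ℝ)) (hPb : Bornology.IsBounded P) (m : ℕ) :
    Submodule ℝ Poly3 where
  carrier := {q | q ∈ restrictTotalDegree (Fin 3) ℝ m ∧ ∫ x in P, eval x q = 0}
  add_mem' := by
    rintro q₁ q₂ ⟨h₁d, h₁i⟩ ⟨h₂d, h₂i⟩
    refine ⟨Submodule.add_mem _ h₁d h₂d, ?_⟩
    have int : ∀ q : Poly3, IntegrableOn (fun x => eval x q) P volume := fun q =>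
      ((MvPolynomial.continuous_eval q).continuousOn.integrableOn_compact
        hPb.isCompact_closure).mono_set subset_closure
    simp only [map_add]
    rw [integral_add (int q₁) (int q₂), h₁i, h₂i, add_zero]
  zero_mem' := ⟨Submodule.zero_mem _, by simp⟩
  smul_mem' := by
    rintro c q ⟨hd, hi⟩
    refine ⟨Submodule.smul_mem _ c hd, ?_⟩
    simp only [smul_eq_C_mul, map_mul, eval_C]
    rw [integral_const_mul, hi, mul_zero]

/-!
Any polynomial `q` is `∂₁` of its antiderivative in `x₁`, which has degree at most
`deg q + 1`; so `(∫ x₁ q, 0, 0)` is a vector field in `[P_n]³` with divergence `q`.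
For the dimension, integration over `P` is a linear functional on `P_{n-1}` that is nonzero
because it sends `1` to `|P| > 0`, so its kernel has codimension one. The monomials of degree
at most `m` in three variables correspond, after adding a slack exponent `m - |d|`, to
multisets of size `m` over four letters, of which there are `binom(m + 3, 3)`.
-/

namespace MvPolynomial

section Antiderivative

variable {σ K : Type*} [Field K]

def antideriv (i : σ) (q : MvPolynomial σ K) : MvPolynomial σ K :=
  ∑ d ∈ q.support, monomial (d + Finsupp.single i 1) (q.coeff d / (d i + 1))

theorem pderiv_monomial_add_single [CharZero K] (i : σ) (d : σ →₀ ℕ) (c : K) :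
    pderiv i (monomial (d + Finsupp.single i 1) (c / (d i + 1))) = monomial d c := by
  rw [pderiv_monomial, add_tsub_cancel_right]
  congr 1
  simp only [Finsupp.coe_add, Pi.add_apply, Finsupp.single_eq_same, Nat.cast_add, Nat.cast_one]
  field_simp

theorem pderiv_antideriv [CharZero K] (i : σ) (q : MvPolynomial σ K) :
    pderiv i (antideriv i q) = q := by
  conv_rhs => rw [q.as_sum]
  rw [antideriv, map_sum]
  exact Finset.sum_congr rfl fun d _ => pderiv_monomial_add_single i d _

theorem totalDegree_antideriv_le (i : σ) (q : MvPolynomial σ K) :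
    (antideriv i q).totalDegree ≤ q.totalDegree + 1 := by
  refine (totalDegree_finsetSum _ _).trans (Finset.sup_le fun d hd => ?_)
  refine (totalDegree_monomial_le _ _).trans ?_
  rw [Finsupp.sum_add_index' (fun _ => rfl) (fun _ _ _ => rfl), Finsupp.sum_single_index rfl]
  exact Nat.add_le_add_right (le_totalDegree hd) 1

end Antiderivative

section MonomialCount

variable (σ : Type*) [Fintype σ]

def sumLeEquivSumOptionEq (m : ℕ) :
    {f : σ → ℕ // ∑ i, f i ≤ m} ≃ {f : Option σ → ℕ // ∑ i, f i = m} where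
  toFun f := ⟨fun o => o.elim (m - ∑ i, f.1 i) f.1, by
    have := f.2
    simp only [Fintype.sum_option, Option.elim_none, Option.elim_some]
    omega⟩
  invFun g := ⟨fun i => g.1 (some i), by
    dsimp only
    have := g.2
    rw [Fintype.sum_option] at this
    omega⟩
  left_inv f := rfl
  right_inv g := by
    have := g.2
    rw [Fintype.sum_option] at this
    ext (_ | i)
    · show m - ∑ i, g.1 (some i) = g.1 none
      omega
    · rfl

theorem card_degree_le (m : ℕ) :
    Nat.card {d : σ →₀ ℕ // d.degree ≤ m} =
      (m + Fintype.card σ).choose (Fintype.card σ) := by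
  classical
  have e : {d : σ →₀ ℕ // d.degree ≤ m} ≃ Sym (Option σ) m :=
    (Finsupp.equivFunOnFinite.subtypeEquiv fun d => by rw [Finsupp.degree_eq_sum]; rfl).trans <|
      (sumLeEquivSumOptionEq σ m).trans (Sym.equivNatSumOfFintype (Option σ) m).symm
  rw [Nat.card_congr e, Nat.card_eq_fintype_card, Sym.card_sym_eq_choose, Fintype.card_option,
    show (Fintype.card σ + 1 + m - 1 = m + Fintype.card σ) by omega, Nat.choose_symm_add]

theorem finrank_restrictTotalDegree (K : Type*) [CommRing K] [StrongRankCondition K] (m : ℕ) :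
    Module.finrank K (restrictTotalDegree σ K m) =
      (m + Fintype.card σ).choose (Fintype.card σ) :=
  (Module.finrank_eq_nat_card_basis (basisRestrictSupport K _)).trans (card_degree_le σ m)

end MonomialCount

section SetIntegral

variable {σ : Type*} [Fintype σ] {μ : Measure (σ → ℝ)} [IsFiniteMeasureOnCompacts μ]
  {P : Set (σ → ℝ)}

theorem integrableOn_eval (hP : Bornology.IsBounded P) (q : MvPolynomial σ ℝ) :
    IntegrableOn (fun x => eval x q) P μ :=
  ((continuous_eval q).continuousOn.integrableOn_compact hP.isCompact_closure).mono_set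
    subset_closure

variable (μ P) in
def setIntegralEval (hP : Bornology.IsBounded P) : MvPolynomial σ ℝ →ₗ[ℝ] ℝ where
  toFun q := ∫ x in P, eval x q ∂μ
  map_add' p q := by
    simp only [eval_add]
    exact integral_add (integrableOn_eval hP p) (integrableOn_eval hP q)
  map_smul' c q := by
    simp only [smul_eval, RingHom.id_apply, smul_eq_mul]
    exact integral_const_mul c _

theorem setIntegralEval_apply (hP : Bornology.IsBounded P) (q : MvPolynomial σ ℝ) :
    setIntegralEval μ P hP q = ∫ x in P, eval x q ∂μ :=
  rfl

theorem setIntegralEval_one (hP : Bornology.IsBounded P) :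
    setIntegralEval μ P hP 1 = μ.real P := by
  simp [setIntegralEval_apply]

theorem finrank_ker_setIntegralEval_domRestrict (hP : Bornology.IsBounded P) (hμP : μ P ≠ 0)
    (m : ℕ) :
    Module.finrank ℝ ((setIntegralEval μ P hP).domRestrict (restrictTotalDegree σ ℝ m)).ker =
      (m + Fintype.card σ).choose (Fintype.card σ) - 1 := by
  have hone : (1 : MvPolynomial σ ℝ) ∈ restrictTotalDegree σ ℝ m :=
    (mem_restrictTotalDegree _ _ _).2 (by simp)
  have hL : (setIntegralEval μ P hP).domRestrict (restrictTotalDegree σ ℝ m) ≠ 0 := by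
    intro h
    have := LinearMap.congr_fun h ⟨1, hone⟩
    rw [LinearMap.domRestrict_apply, setIntegralEval_one, LinearMap.zero_apply,
      measureReal_eq_zero_iff hP.measure_lt_top.ne] at this
    exact hμP this
  rw [← finrank_restrictTotalDegree σ ℝ m, ← Module.Dual.finrank_ker_add_one_of_ne_zero hL,
    Nat.add_sub_cancel]

end SetIntegral

end MvPolynomial

theorem pdiv_single (i : Fin 3) (p : Poly3) : pdiv (Pi.single i p) = pderiv i p := by
  rw [pdiv, Fintype.sum_eq_single i fun j hj => by rw [Pi.single_eq_of_ne hj, map_zero],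
    Pi.single_eq_same]

theorem exists_pdiv_eq (q : Poly3) :
    ∃ v : Fin 3 → Poly3, (∀ i, (v i).totalDegree ≤ q.totalDegree + 1) ∧ pdiv v = q := by
  refine ⟨Pi.single 0 (antideriv 0 q), fun i => ?_, by rw [pdiv_single, pderiv_antideriv]⟩
  rcases eq_or_ne i 0 with rfl | hi
  · simpa using totalDegree_antideriv_le 0 q
  · simp [hi]

theorem zeroMeanPolys_eq_map_ker (P : Set (Fin 3 → ℝ)) (hPb : Bornology.IsBounded P) (m : ℕ) :
    zeroMeanPolys P hPb m = ((setIntegralEval volume P hPb).domRestrict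
      (restrictTotalDegree (Fin 3) ℝ m)).ker.map (restrictTotalDegree (Fin 3) ℝ m).subtype := by
  ext q
  constructor
  · rintro ⟨hq, hmean⟩
    exact ⟨⟨q, hq⟩, hmean, rfl⟩
  · rintro ⟨⟨q, hq⟩, hmean, rfl⟩
    exact ⟨hq, hmean⟩

theorem finrank_zeroMeanPolys {P : Set (Fin 3 → ℝ)} (hPb : Bornology.IsBounded P)
    (hPm : 0 < volume P) (m : ℕ) :
    Module.finrank ℝ (zeroMeanPolys P hPb m) = (m + 3).choose 3 - 1 := by
  rw [zeroMeanPolys_eq_map_ker, Submodule.finrank_map_subtype_eq,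
    finrank_ker_setIntegralEval_domRestrict hPb hPm.ne', Fintype.card_fin]

theorem zero_mean_poly_is_divergence_general (n : ℕ) (hn : 1 ≤ n)
    (P : Set (Fin 3 → ℝ)) (hPb : Bornology.IsBounded P)
    (hPm : 0 < volume P) :
    (∀ q : Poly3, q.totalDegree ≤ n - 1 → (∫ x in P, eval x q) = 0 →
      ∃ v : Fin 3 → Poly3, (∀ i, (v i).totalDegree ≤ n) ∧ pdiv v = q) ∧
    Module.finrank ℝ ↥(zeroMeanPolys P hPb (n - 1)) = Nat.choose (n - 1 + 3) 3 - 1 := by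
  refine ⟨fun q hq _ => ?_, finrank_zeroMeanPolys hPb hPm (n - 1)⟩
  obtain ⟨v, hv, hdiv⟩ := exists_pdiv_eq q
  exact ⟨v, fun i => (hv i).trans (by omega), hdiv⟩

/-- Let `n ≥ 1` and let `P ⊂ ℝ³` be a bounded domain of positive measure.  Every
polynomial in `P_{n-1}` with zero mean over `P` is the divergence of a vector
polynomial in `[P_n]³`, and the space of zero-mean polynomials of degree at most
`n-1` has dimension `π_{n-1,3} - 1 = binom(n-1+3, 3) - 1`. -/
theorem zero_mean_poly_is_divergence (n : ℕ) (hn : 1 ≤ n)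
    (P : Set (Fin 3 → ℝ)) (hPo : IsOpen P) (hPb : Bornology.IsBounded P)
    (hPm : 0 < volume P) :
    (∀ q : Poly3, q.totalDegree ≤ n - 1 → (∫ x in P, eval x q) = 0 →
      ∃ v : Fin 3 → Poly3, (∀ i, (v i).totalDegree ≤ n) ∧ pdiv v = q) ∧
    Module.finrank ℝ ↥(zeroMeanPolys P hPb (n - 1)) = Nat.choose (n - 1 + 3) 3 - 1 :=
  zero_mean_poly_is_divergence_general n hn P hPb hPm

end
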